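/- Let L₋₁ = αβᵗ, L'₋₁ = αβ'ᵗ with βᵗα = β'ᵗα = 0, and let L₀, L'₀ be matrices with L₀α = κα and L'₀α = κ'α. Then the matrix M = [L₋₁, L'₀] + [L₀, L'₋₁] is of the form αγᵗ for some γ ∈ ℂⁿ with γᵗα = 0. -/

import Mathlib

/-! An eigenvector `α` of `L` makes `α` a left factor of `⁅α βᵗ, L⁆` as well: since `L α = κ α`,
`⁅α βᵗ, L⁆ = α (βᵗ L - κ βᵗ)`, and the new right factor is orthogonal to `α` because
`βᵗ L α = κ βᵗ α`. Summing two such commutators gives the claim. -/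

namespace Matrix

variable {n R : Type*} [Fintype n] [CommRing R] {L : Matrix n n R} {α : n → R} {κ : R}

theorem lie_vecMulVec_of_mulVec_eq_smul (h : L *ᵥ α = κ • α) (β : n → R) :
    ⁅vecMulVec α β, L⁆ = vecMulVec α (β ᵥ* L - κ • β) := by
  rw [Ring.lie_def, vecMulVec_mul, mul_vecMulVec, h, smul_vecMulVec, vecMulVec_sub,
    vecMulVec_smul]

theorem vecMul_sub_smul_dotProduct_of_mulVec_eq_smul (h : L *ᵥ α = κ • α) (β : n → R) :
    (β ᵥ* L - κ • β) ⬝ᵥ α = 0 := by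
  rw [sub_dotProduct, ← dotProduct_mulVec, h, dotProduct_smul, smul_dotProduct, sub_self]

end Matrix

open Matrix in
theorem stmt_3_general (n : ℕ) (α β β' : Fin n → ℂ) (L₀ L₀' : Matrix (Fin n) (Fin n) ℂ) (κ κ' : ℂ)
    (h₀ : L₀.mulVec α = κ • α) (h₀' : L₀'.mulVec α = κ' • α) :
    ∃ γ : Fin n → ℂ,
      ⁅Matrix.vecMulVec α β, L₀'⁆ + ⁅L₀, Matrix.vecMulVec α β'⁆ = Matrix.vecMulVec α γ
      ∧ ∑ i, γ i * α i = 0 := by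
  refine ⟨(β ᵥ* L₀' - κ' • β) - (β' ᵥ* L₀ - κ • β'), ?_, ?_⟩
  · rw [Ring.lie_def L₀, ← neg_sub, ← Ring.lie_def, lie_vecMulVec_of_mulVec_eq_smul h₀',
      lie_vecMulVec_of_mulVec_eq_smul h₀, ← sub_eq_add_neg, ← vecMulVec_sub]
  · change (_ - _) ⬝ᵥ α = 0
    rw [sub_dotProduct, vecMul_sub_smul_dotProduct_of_mulVec_eq_smul h₀',
      vecMul_sub_smul_dotProduct_of_mulVec_eq_smul h₀, sub_zero]

/-- With L₋₁ = αβᵗ, L'₋₁ = αβ'ᵗ, βᵗα = β'ᵗα = 0, L₀α = κα, L'₀α = κ'α, the matrix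
[L₋₁, L'₀] + [L₀, L'₋₁] equals αγᵗ for some γ with γᵗα = 0. -/
theorem stmt_3 (n : ℕ) (α β β' : Fin n → ℂ) (L₀ L₀' : Matrix (Fin n) (Fin n) ℂ) (κ κ' : ℂ)
    (hβ : ∑ i, β i * α i = 0) (hβ' : ∑ i, β' i * α i = 0)
    (h₀ : L₀.mulVec α = κ • α) (h₀' : L₀'.mulVec α = κ' • α) :
    ∃ γ : Fin n → ℂ,
      ⁅Matrix.vecMulVec α β, L₀'⁆ + ⁅L₀, Matrix.vecMulVec α β'⁆ = Matrix.vecMulVec α γ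
      ∧ ∑ i, γ i * α i = 0 :=
  stmt_3_general n α β β' L₀ L₀' κ κ' h₀ h₀'
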